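/- arXiv:1503.00239 — 3 statements merged into one kernel-verified Lean document; each statement's English description precedes it below -/
import Mathlib

section
/- Let Π = I − |ψ⟩⟨ψ| be the orthogonal projection onto the orthogonal complement of ψ. Then for each sign s ∈ {+1, −1}, the vector χ = (A − s·i·B)ψ satisfies ⟪χ, Π χ⟫ = ΔA² + ΔB² − s·i⟨[A,B]⟩; equivalently, ‖Π (A − s·i·B) ψ‖² = ΔA² + ΔB² − s·i⟨[A,B]⟩. -/
open scoped ComplexInnerProductSpace BigOperators

noncomputable section

variable {H : Type*} [NormedAddCommGroup H] [InnerProductSpace ℂ H]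

/-- Expectation value ⟨A⟩ = Re ⟪ψ, A ψ⟫ of an operator in the state ψ. -/
def expVal (ψ : H) (A : H →ₗ[ℂ] H) : ℝ := (⟪ψ, A ψ⟫).re

/-- Variance ΔA² = ⟨A²⟩ − ⟨A⟩². -/
def varOf (ψ : H) (A : H →ₗ[ℂ] H) : ℝ := (⟪ψ, A (A ψ)⟫).re - (expVal ψ A) ^ 2

/-- Standard deviation ΔA = √(ΔA²). -/
def stdDev (ψ : H) (A : H →ₗ[ℂ] H) : ℝ := Real.sqrt (varOf ψ A)

/-- The real number i⟨[A,B]⟩. -/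
def commRe (ψ : H) (A B : H →ₗ[ℂ] H) : ℝ :=
  (Complex.I * ⟪ψ, (A ∘ₗ B - B ∘ₗ A) ψ⟫).re

/-- The projection Π = I − |ψ⟩⟨ψ|. -/
def projPerp (ψ : H) : H →ₗ[ℂ] H :=
  LinearMap.id - ((innerSL ℂ ψ).smulRight ψ).toLinearMap

/-- The deviation operator Ă = A − ⟨A⟩I. -/
def devOp (ψ : H) (A : H →ₗ[ℂ] H) : H →ₗ[ℂ] H :=
  A - (expVal ψ A : ℂ) • LinearMap.id

/-- The operator C = −i[A,B]. -/
def opC (A B : H →ₗ[ℂ] H) : H →ₗ[ℂ] H := (-Complex.I) • (A ∘ₗ B - B ∘ₗ A)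

/-- The operator F = ĂB̆ + B̆Ă. -/
def opF (ψ : H) (A B : H →ₗ[ℂ] H) : H →ₗ[ℂ] H :=
  devOp ψ A ∘ₗ devOp ψ B + devOp ψ B ∘ₗ devOp ψ A


/-!
For χ = (A − s·i·B)ψ both sides equal ‖χ‖² − |⟪ψ, χ⟫|², since Π only removes the ψ-component
of χ. Symmetry of A and B makes ⟨A⟩, ⟨B⟩ real, so |⟪ψ, χ⟫|² = ⟨A⟩² + s²⟨B⟩², while
‖χ‖² = ‖Aψ‖² + s²‖Bψ‖² − s·i⟨[A,B]⟩ with ‖Aψ‖² = ⟨A²⟩; then s² = 1.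
-/

open Complex

theorem projPerp_apply (ψ x : H) : projPerp ψ x = x - ⟪ψ, x⟫ • ψ := by
  simp [projPerp]

theorem inner_projPerp_self (ψ x : H) :
    ⟪x, projPerp ψ x⟫ = ((‖x‖ ^ 2 - ‖⟪ψ, x⟫‖ ^ 2 : ℝ) : ℂ) := by
  rw [projPerp_apply, inner_sub_right, inner_smul_right, ← inner_conj_symm x ψ,
    inner_self_eq_norm_sq_to_K, mul_conj', RCLike.ofReal_eq_complex_ofReal]
  push_cast
  ring

theorem norm_projPerp_sq {ψ : H} (hψ : ‖ψ‖ = 1) (x : H) :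
    ‖projPerp ψ x‖ ^ 2 = ‖x‖ ^ 2 - ‖⟪ψ, x⟫‖ ^ 2 := by
  rw [projPerp_apply, norm_sub_sq (𝕜 := ℂ), norm_smul, hψ, inner_smul_right,
    ← inner_conj_symm x ψ, mul_conj', ← ofReal_pow, RCLike.re_to_complex, ofReal_re]
  ring

theorem norm_sub_ofReal_mul_I_smul_sq (x y : H) (s : ℝ) :
    ‖x - ((s : ℂ) * I) • y‖ ^ 2 = ‖x‖ ^ 2 + s ^ 2 * ‖y‖ ^ 2 + 2 * s * (⟪x, y⟫).im := by
  rw [norm_sub_sq (𝕜 := ℂ), norm_smul, norm_mul, norm_I, mul_one, norm_real, Real.norm_eq_abs,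
    mul_pow, sq_abs, inner_smul_right, RCLike.re_to_complex, mul_assoc, re_ofReal_mul, I_mul_re]
  ring

namespace LinearMap.IsSymmetric

variable {A : H →ₗ[ℂ] H}

theorem inner_self_apply_eq_expVal (hA : A.IsSymmetric) (ψ : H) :
    ⟪ψ, A ψ⟫ = (expVal ψ A : ℂ) :=
  (hA.coe_re_inner_self_apply ψ).symm

theorem norm_apply_sq_eq_varOf_add (hA : A.IsSymmetric) (ψ : H) :
    ‖A ψ‖ ^ 2 = varOf ψ A + expVal ψ A ^ 2 := by
  rw [varOf, sub_add_cancel, ← hA ψ (A ψ), ← inner_self_eq_norm_sq (𝕜 := ℂ),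
    RCLike.re_to_complex]

end LinearMap.IsSymmetric

theorem commRe_eq_neg_two_mul_im_inner {A B : H →ₗ[ℂ] H} (hA : A.IsSymmetric)
    (hB : B.IsSymmetric) (ψ : H) : commRe ψ A B = -2 * (⟪A ψ, B ψ⟫).im := by
  rw [commRe, LinearMap.sub_apply, inner_sub_right, LinearMap.comp_apply, LinearMap.comp_apply,
    ← hA ψ (B ψ), ← hB ψ (A ψ), ← inner_conj_symm (B ψ) (A ψ)]
  simp only [mul_re, I_re, I_im, sub_re, sub_im, conj_re, conj_im]
  ring

theorem norm_inner_sub_ofReal_mul_I_smul_sq {A B : H →ₗ[ℂ] H} (hA : A.IsSymmetric)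
    (hB : B.IsSymmetric) (ψ : H) (s : ℝ) :
    ‖⟪ψ, A ψ - ((s : ℂ) * I) • B ψ⟫‖ ^ 2 = expVal ψ A ^ 2 + s ^ 2 * expVal ψ B ^ 2 := by
  have hre_im :
      (expVal ψ A : ℂ) - s * I * expVal ψ B = expVal ψ A + (-s * expVal ψ B : ℝ) * I := by
    push_cast
    ring
  rw [inner_sub_right, inner_smul_right, hA.inner_self_apply_eq_expVal,
    hB.inner_self_apply_eq_expVal, hre_im, Complex.sq_norm, normSq_add_mul_I]
  ring

theorem proj_of_chi_gives_variance_sum_general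
    {H : Type*} [NormedAddCommGroup H] [InnerProductSpace ℂ H]
    (A B : H →ₗ[ℂ] H) (hA : A.IsSymmetric) (hB : B.IsSymmetric)
    (ψ : H) (hψ : ‖ψ‖ = 1)
    (s : ℝ) (hs : s = 1 ∨ s = -1) :
    ⟪(A - ((s : ℂ) * Complex.I) • B) ψ, projPerp ψ ((A - ((s : ℂ) * Complex.I) • B) ψ)⟫
        = ((varOf ψ A + varOf ψ B - s * commRe ψ A B : ℝ) : ℂ)
      ∧ ‖projPerp ψ ((A - ((s : ℂ) * Complex.I) • B) ψ)‖ ^ 2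
        = varOf ψ A + varOf ψ B - s * commRe ψ A B := by
  have hs2 : s ^ 2 = 1 := by rcases hs with rfl | rfl <;> norm_num
  have hperp : ‖A ψ - ((s : ℂ) * I) • B ψ‖ ^ 2 - ‖⟪ψ, A ψ - ((s : ℂ) * I) • B ψ⟫‖ ^ 2
      = varOf ψ A + varOf ψ B - s * commRe ψ A B := by
    rw [norm_sub_ofReal_mul_I_smul_sq, norm_inner_sub_ofReal_mul_I_smul_sq hA hB,
      hA.norm_apply_sq_eq_varOf_add, hB.norm_apply_sq_eq_varOf_add,
      commRe_eq_neg_two_mul_im_inner hA hB]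
    linear_combination varOf ψ B * hs2
  rw [LinearMap.sub_apply, LinearMap.smul_apply]
  exact ⟨by rw [inner_projPerp_self, hperp], by rw [norm_projPerp_sq hψ, hperp]⟩

theorem proj_of_chi_gives_variance_sum
    {H : Type*} [NormedAddCommGroup H] [InnerProductSpace ℂ H] [FiniteDimensional ℂ H]
    (A B : H →ₗ[ℂ] H) (hA : A.IsSymmetric) (hB : B.IsSymmetric)
    (ψ : H) (hψ : ‖ψ‖ = 1)
    (s : ℝ) (hs : s = 1 ∨ s = -1) :
    ⟪(A - ((s : ℂ) * Complex.I) • B) ψ, projPerp ψ ((A - ((s : ℂ) * Complex.I) • B) ψ)⟫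
        = ((varOf ψ A + varOf ψ B - s * commRe ψ A B : ℝ) : ℂ)
      ∧ ‖projPerp ψ ((A - ((s : ℂ) * Complex.I) • B) ψ)‖ ^ 2
        = varOf ψ A + varOf ψ B - s * commRe ψ A B :=
  proj_of_chi_gives_variance_sum_general A B hA hB ψ hψ s hs
end
end

section
/- (Vaidman's formula.) If ΔA > 0, then there exists a unit vector ψ⊥ ∈ H with ⟪ψ, ψ⊥⟫ = 0 such that A ψ = ⟨A⟩ ψ + ΔA · ψ⊥. -/
open scoped ComplexInnerProductSpace BigOperators

noncomputable section

variable {H : Type*} [NormedAddCommGroup H] [InnerProductSpace ℂ H]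

/-! The deviation vector `Ă ψ = A ψ - ⟨A⟩ ψ` is orthogonal to `ψ` and has length `ΔA`, since
`‖Ă ψ‖² = ‖A ψ‖² - ⟨A⟩² = ⟨A²⟩ - ⟨A⟩²`; normalising it gives `ψ⊥`. -/

section
variable {A : H →ₗ[ℂ] H} {ψ : H}

theorem devOp_apply (A : H →ₗ[ℂ] H) (ψ x : H) :
    devOp ψ A x = A x - (expVal ψ A : ℂ) • x :=
  rfl

theorem LinearMap.IsSymmetric.inner_apply_self_eq_expVal (hA : A.IsSymmetric) (ψ : H) :
    ⟪A ψ, ψ⟫ = expVal ψ A := by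
  rw [hA, expVal]
  exact (hA.coe_re_inner_self_apply ψ).symm

theorem LinearMap.IsSymmetric.varOf_eq (hA : A.IsSymmetric) (ψ : H) :
    varOf ψ A = ‖A ψ‖ ^ 2 - expVal ψ A ^ 2 := by
  rw [varOf, ← hA]
  exact congrArg (· - _) (inner_self_eq_norm_sq (𝕜 := ℂ) (A ψ))

theorem LinearMap.IsSymmetric.inner_devOp_apply_self (hA : A.IsSymmetric) (hψ : ‖ψ‖ = 1) :
    ⟪ψ, devOp ψ A ψ⟫ = 0 := by
  rw [devOp_apply, inner_sub_right, inner_smul_right, inner_self_eq_one_of_norm_eq_one hψ,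
    ← hA, hA.inner_apply_self_eq_expVal, mul_one, sub_self]

theorem LinearMap.IsSymmetric.norm_devOp_apply_self (hA : A.IsSymmetric) (hψ : ‖ψ‖ = 1) :
    ‖devOp ψ A ψ‖ = stdDev ψ A := by
  have hsq : ‖devOp ψ A ψ‖ ^ 2 = varOf ψ A := by
    rw [devOp_apply, norm_sub_sq (𝕜 := ℂ), inner_smul_right, hA.inner_apply_self_eq_expVal,
      norm_smul, hψ, hA.varOf_eq]
    simp only [← Complex.ofReal_mul, RCLike.re_to_complex, Complex.ofReal_re, Complex.norm_real,
      Real.norm_eq_abs, mul_one, sq_abs]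
    ring
  rw [stdDev, ← hsq, Real.sqrt_sq (norm_nonneg _)]

end

theorem vaidman_formula_general
    {H : Type*} [NormedAddCommGroup H] [InnerProductSpace ℂ H]
    (A : H →ₗ[ℂ] H) (hA : A.IsSymmetric)
    (ψ : H) (hψ : ‖ψ‖ = 1)
    (hΔA : 0 < stdDev ψ A) :
    ∃ ψperp : H, ‖ψperp‖ = 1 ∧ ⟪ψ, ψperp⟫ = 0 ∧
      A ψ = (expVal ψ A : ℂ) • ψ + (stdDev ψ A : ℂ) • ψperp := by
  set φ := devOp ψ A ψ
  have hφ : ‖φ‖ = stdDev ψ A := hA.norm_devOp_apply_self hψ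
  have hφ0 : φ ≠ 0 := norm_pos_iff.mp (hφ ▸ hΔA)
  refine ⟨(‖φ‖⁻¹ : ℂ) • φ, norm_smul_inv_norm hφ0, ?_, ?_⟩
  · rw [inner_smul_right, hA.inner_devOp_apply_self hψ, mul_zero]
  · have hφ0' : (‖φ‖ : ℂ) ≠ 0 := Complex.ofReal_ne_zero.mpr (norm_ne_zero_iff.mpr hφ0)
    rw [smul_smul, ← hφ, mul_inv_cancel₀ hφ0', one_smul]
    exact (add_sub_cancel _ _).symm

theorem vaidman_formula
    {H : Type*} [NormedAddCommGroup H] [InnerProductSpace ℂ H] [FiniteDimensional ℂ H]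
    (A : H →ₗ[ℂ] H) (hA : A.IsSymmetric)
    (ψ : H) (hψ : ‖ψ‖ = 1)
    (hΔA : 0 < stdDev ψ A) :
    ∃ ψperp : H, ‖ψperp‖ = 1 ∧ ⟪ψ, ψperp⟫ = 0 ∧
      A ψ = (expVal ψ A : ℂ) • ψ + (stdDev ψ A : ℂ) • ψperp :=
  vaidman_formula_general A hA ψ hψ hΔA
end
end

section
/- (Schrödinger residual for a qubit.) Define the Pauli matrices as complex 2×2 matrices σ₁ = [[0,1],[1,0]], σ₂ = [[0,−i],[i,0]], σ₃ = [[1,0],[0,−1]], and for v ∈ ℝ³ write v·σ = v₁σ₁ + v₂σ₂ + v₃σ₃. Let a, b ∈ ℝ³ be unit vectors and r ∈ ℝ³ with ‖r‖ ≤ 1; set A = a·σ, B = b·σ, ρ = (1/2)(I + r·σ). For a 2×2 matrix O, let ⟨O⟩ = Re Tr(ρO) and ΔO² = ⟨O²⟩ − ⟨O⟩². Let C = −i(AB − BA) and F = (A − ⟨A⟩I)(B − ⟨B⟩I) + (B − ⟨B⟩I)(A − ⟨A⟩I). Then ΔA²·ΔB² − (1/4)⟨C⟩² − (1/4)⟨F⟩²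 = (1 − (a·b)²)(1 − ‖r‖²). In particular, the Schrödinger uncertainty relation is saturated (the left-hand side vanishes) for every pure qubit state, i.e. whenever ‖r‖ = 1. -/
noncomputable section

/-- Euclidean dot product on ℝ³. -/
def dot3 (a b : Fin 3 → ℝ) : ℝ := a 0 * b 0 + a 1 * b 1 + a 2 * b 2

/-- Euclidean norm on ℝ³. -/
def norm3 (a : Fin 3 → ℝ) : ℝ := Real.sqrt (dot3 a a)

/-- Cross product on ℝ³. -/
def cross3 (a b : Fin 3 → ℝ) : Fin 3 → ℝ :=
  ![a 1 * b 2 - a 2 * b 1, a 2 * b 0 - a 0 * b 2, a 0 * b 1 - a 1 * b 0]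

/-- The Pauli matrix σ₁. -/
def pauli1 : Matrix (Fin 2) (Fin 2) ℂ := !![0, 1; 1, 0]

/-- The Pauli matrix σ₂. -/
def pauli2 : Matrix (Fin 2) (Fin 2) ℂ := !![0, -Complex.I; Complex.I, 0]

/-- The Pauli matrix σ₃. -/
def pauli3 : Matrix (Fin 2) (Fin 2) ℂ := !![1, 0; 0, -1]

/-- v·σ = v₁σ₁ + v₂σ₂ + v₃σ₃ for v ∈ ℝ³. -/
def dotPauli (v : Fin 3 → ℝ) : Matrix (Fin 2) (Fin 2) ℂ :=
  (v 0 : ℂ) • pauli1 + (v 1 : ℂ) • pauli2 + (v 2 : ℂ) • pauli3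

/-- Expectation value ⟨O⟩ = Re Tr(ρO). -/
def mExp (ρ O : Matrix (Fin 2) (Fin 2) ℂ) : ℝ := ((ρ * O).trace).re

/-- Variance ΔO² = ⟨O²⟩ − ⟨O⟩². -/
def mVar (ρ O : Matrix (Fin 2) (Fin 2) ℂ) : ℝ := mExp ρ (O * O) - (mExp ρ O) ^ 2


/-!
The Pauli relations `(a·σ)(b·σ) + (b·σ)(a·σ) = 2 (a·b) I` and `[a·σ, b·σ] = 2i (a×b)·σ`, together
with `Re Tr(ρ (v·σ)) = v·r` for `ρ = ½ (I + r·σ)`, give `⟨A⟩ = a·r`, `ΔA² = ‖a‖² - (a·r)²`,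
`⟨C⟩ = 2 (a×b)·r` and `⟨F⟩ = 2 (a·b - (a·r)(b·r))`. The residual is then a polynomial in `a, b, r`,
and Lagrange's identity `((a×b)·r)² = det Gram(a, b, r)` turns it into
`(‖a‖²‖b‖² - (a·b)²)(1 - ‖r‖²)`.
-/

open Complex Matrix

lemma dot3_self_nonneg (v : Fin 3 → ℝ) : 0 ≤ dot3 v v := by
  unfold dot3
  nlinarith [mul_self_nonneg (v 0), mul_self_nonneg (v 1), mul_self_nonneg (v 2)]

lemma norm3_sq (v : Fin 3 → ℝ) : norm3 v ^ 2 = dot3 v v :=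
  Real.sq_sqrt (dot3_self_nonneg v)

lemma dotPauli_mul_self (a : Fin 3 → ℝ) : dotPauli a * dotPauli a = dot3 a a • 1 := by
  rw [← Complex.coe_smul]
  ext i j
  fin_cases i <;> fin_cases j <;>
    simp [dotPauli, pauli1, pauli2, pauli3, dot3] <;> ring_nf <;> simp [I_sq]

lemma dotPauli_mul_add_mul_swap (a b : Fin 3 → ℝ) :
    dotPauli a * dotPauli b + dotPauli b * dotPauli a = (2 * dot3 a b) • 1 := by
  rw [← Complex.coe_smul]
  ext i j
  fin_cases i <;> fin_cases j <;>
    simp [dotPauli, pauli1, pauli2, pauli3, dot3] <;> ring_nf <;> simp [I_sq]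

lemma dotPauli_mul_sub_mul_swap (a b : Fin 3 → ℝ) :
    dotPauli a * dotPauli b - dotPauli b * dotPauli a = (2 * I) • dotPauli (cross3 a b) := by
  ext i j
  fin_cases i <;> fin_cases j <;>
    simp [dotPauli, pauli1, pauli2, pauli3, cross3] <;> ring_nf <;> simp [I_sq] <;> ring

lemma sub_smul_one_mul_add_mul_swap {R A : Type*} [CommRing R] [Ring A] [Algebra R A]
    (x y : A) (α β : R) :
    (x - α • 1) * (y - β • 1) + (y - β • 1) * (x - α • 1)
      = (x * y + y * x) - (2 * β) • x - (2 * α) • y + (2 * α * β) • 1 := by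
  simp only [sub_mul, mul_sub, smul_mul_assoc, mul_smul_comm, one_mul, mul_one]
  module

section Expectation

variable (ρ O O' : Matrix (Fin 2) (Fin 2) ℂ)

lemma mExp_add : mExp ρ (O + O') = mExp ρ O + mExp ρ O' := by
  simp [mExp, mul_add, trace_add]

lemma mExp_sub : mExp ρ (O - O') = mExp ρ O - mExp ρ O' := by
  simp [mExp, mul_sub, trace_sub]

lemma mExp_smul (c : ℝ) : mExp ρ (c • O) = c * mExp ρ O := by
  simp [mExp, trace_smul]

end Expectation

def blochState (r : Fin 3 → ℝ) : Matrix (Fin 2) (Fin 2) ℂ := (2 : ℂ)⁻¹ • (1 + dotPauli r)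

section BlochState

variable (r a b : Fin 3 → ℝ)

lemma mExp_blochState_one : mExp (blochState r) 1 = 1 := by
  simp [blochState, mExp, dotPauli, pauli1, pauli2, pauli3, trace_fin_two]

lemma mExp_blochState_dotPauli : mExp (blochState r) (dotPauli a) = dot3 a r := by
  simp [blochState, mExp, dotPauli, pauli1, pauli2, pauli3, dot3, trace_fin_two, mul_apply,
    Fin.sum_univ_two]
  ring

lemma mVar_blochState_dotPauli :
    mVar (blochState r) (dotPauli a) = dot3 a a - dot3 a r ^ 2 := by
  rw [mVar, dotPauli_mul_self, mExp_smul, mExp_blochState_one, mul_one, mExp_blochState_dotPauli]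

lemma mExp_blochState_commutator :
    mExp (blochState r) (-I • (dotPauli a * dotPauli b - dotPauli b * dotPauli a))
      = 2 * dot3 (cross3 a b) r := by
  have h : -I • (2 * I) • dotPauli (cross3 a b) = (2 : ℝ) • dotPauli (cross3 a b) := by
    rw [smul_smul, ← Complex.coe_smul]
    ring_nf
    simp [I_sq]
  rw [dotPauli_mul_sub_mul_swap, h, mExp_smul, mExp_blochState_dotPauli]

lemma mExp_blochState_centered_anticommutator :
    mExp (blochState r)
      ((dotPauli a - (dot3 a r : ℂ) • 1) * (dotPauli b - (dot3 b r : ℂ) • 1)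
        + (dotPauli b - (dot3 b r : ℂ) • 1) * (dotPauli a - (dot3 a r : ℂ) • 1))
      = 2 * (dot3 a b - dot3 a r * dot3 b r) := by
  simp only [Complex.coe_smul]
  rw [sub_smul_one_mul_add_mul_swap, dotPauli_mul_add_mul_swap]
  simp only [mExp_add, mExp_sub, mExp_smul, mExp_blochState_one, mExp_blochState_dotPauli]
  ring

end BlochState

lemma schrodinger_residual_identity (a b r : Fin 3 → ℝ) :
    (dot3 a a - dot3 a r ^ 2) * (dot3 b b - dot3 b r ^ 2) - (1 / 4) * (2 * dot3 (cross3 a b) r) ^ 2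
        - (1 / 4) * (2 * (dot3 a b - dot3 a r * dot3 b r)) ^ 2
      = (dot3 a a * dot3 b b - dot3 a b ^ 2) * (1 - dot3 r r) := by
  simp [dot3, cross3]
  ring

lemma schrodinger_residual_blochState (a b r : Fin 3 → ℝ) :
    let ρ := blochState r
    let A := dotPauli a
    let B := dotPauli b
    mVar ρ A * mVar ρ B - (1 / 4) * (mExp ρ ((-I) • (A * B - B * A))) ^ 2
        - (1 / 4) * (mExp ρ ((A - (mExp ρ A : ℂ) • 1) * (B - (mExp ρ B : ℂ) • 1)
          + (B - (mExp ρ B : ℂ) • 1) * (A - (mExp ρ A : ℂ) • 1))) ^ 2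
      = (dot3 a a * dot3 b b - dot3 a b ^ 2) * (1 - dot3 r r) := by
  intro ρ A B
  rw [mVar_blochState_dotPauli, mVar_blochState_dotPauli, mExp_blochState_commutator,
    mExp_blochState_dotPauli, mExp_blochState_dotPauli, mExp_blochState_centered_anticommutator,
    schrodinger_residual_identity]

theorem schrodinger_residual_qubit_general (a b r : Fin 3 → ℝ)
    (ha : norm3 a = 1) (hb : norm3 b = 1)
    (A B ρ C F : Matrix (Fin 2) (Fin 2) ℂ)
    (hAdef : A = dotPauli a) (hBdef : B = dotPauli b)
    (hρdef : ρ = ((2 : ℂ))⁻¹ • (1 + dotPauli r))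
    (hCdef : C = (-Complex.I) • (A * B - B * A))
    (hFdef : F = (A - (mExp ρ A : ℂ) • 1) * (B - (mExp ρ B : ℂ) • 1)
        + (B - (mExp ρ B : ℂ) • 1) * (A - (mExp ρ A : ℂ) • 1)) :
    mVar ρ A * mVar ρ B - (1 / 4) * (mExp ρ C) ^ 2 - (1 / 4) * (mExp ρ F) ^ 2
        = (1 - dot3 a b ^ 2) * (1 - norm3 r ^ 2)
      ∧ (norm3 r = 1 →
          mVar ρ A * mVar ρ B - (1 / 4) * (mExp ρ C) ^ 2 - (1 / 4) * (mExp ρ F) ^ 2 = 0) := by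
  obtain rfl : ρ = blochState r := hρdef
  subst hAdef hBdef hCdef hFdef
  have haa : dot3 a a = 1 := by rw [← norm3_sq, ha, one_pow]
  have hbb : dot3 b b = 1 := by rw [← norm3_sq, hb, one_pow]
  rw [schrodinger_residual_blochState, haa, hbb, one_mul, ← norm3_sq]
  exact ⟨rfl, fun hr => by rw [hr]; ring⟩

theorem schrodinger_residual_qubit (a b r : Fin 3 → ℝ)
    (ha : norm3 a = 1) (hb : norm3 b = 1) (hr : norm3 r ≤ 1)
    (A B ρ C F : Matrix (Fin 2) (Fin 2) ℂ)
    (hAdef : A = dotPauli a) (hBdef : B = dotPauli b)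
    (hρdef : ρ = ((2 : ℂ))⁻¹ • (1 + dotPauli r))
    (hCdef : C = (-Complex.I) • (A * B - B * A))
    (hFdef : F = (A - (mExp ρ A : ℂ) • 1) * (B - (mExp ρ B : ℂ) • 1)
        + (B - (mExp ρ B : ℂ) • 1) * (A - (mExp ρ A : ℂ) • 1)) :
    mVar ρ A * mVar ρ B - (1 / 4) * (mExp ρ C) ^ 2 - (1 / 4) * (mExp ρ F) ^ 2
        = (1 - dot3 a b ^ 2) * (1 - norm3 r ^ 2)
      ∧ (norm3 r = 1 →
          mVar ρ A * mVar ρ B - (1 / 4) * (mExp ρ C) ^ 2 - (1 / 4) * (mExp ρ F) ^ 2 = 0) :=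
  schrodinger_residual_qubit_general a b r ha hb A B ρ C F hAdef hBdef hρdef hCdef hFdef
end
end
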